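/- Let ν > 2, ω₁ = ½√(ν²-4), q₀, s₀ ∈ ℝ, A₂₁ = (νs₀+2q₀)/√(ν²-4), A₂₂ = (νq₀+2s₀)/√(ν²-4), F(t) = 1 - s₀ + (A₂₁ sinh ω₁t + s₀ cosh ω₁t)e^{-νt/2}, G(t) = (-A₂₂ sinh ω₁t + q₀ cosh ω₁t)e^{-νt/2}. Then F(0) = 1, G(0) = q₀, and wherever F ≠ 0, q = G/F with s = -q' - q² - νq solves q' = -s - q² - νq, s' = q - qs with the given initial data. -/

import Mathlib

/-!
The system is a Riccati equation in disguise. With `c = 1 - s₀`, the pair `(F, G)` solves the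
linear system `F' = G`, `G' = -ν G - F + c`, i.e. `F'' + ν F' + F = c`, whose homogeneous part has
characteristic roots `-ν/2 ± ω₁` (this is where `sinh`, `cosh` and `e^{-νt/2}` come from, and the
constants `A₂₁`, `A₂₂` fit the initial data). For any such pair, `q = G / F` and `s = 1 - c / F`
satisfy `q' = -s - q² - νq` and `s' = q - qs` wherever `F ≠ 0`; in particular
`s = -q' - q² - νq` there.
-/

open Real Filter Topology

section RiccatiLinearization

variable {ν c t : ℝ} {F G : ℝ → ℝ}

theorem hasDerivAt_div_of_linearSystem (hF : HasDerivAt F (G t) t)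
    (hG : HasDerivAt G (-ν * G t - F t + c) t) (hFt : F t ≠ 0) :
    HasDerivAt (fun x => G x / F x)
      (-(1 - c / F t) - (G t / F t) ^ 2 - ν * (G t / F t)) t :=
  (hG.div hF hFt).congr_deriv (by field_simp; ring)

theorem hasDerivAt_one_sub_const_div (hF : HasDerivAt F (G t) t) (hFt : F t ≠ 0) :
    HasDerivAt (fun x => 1 - c / F x) (G t / F t - G t / F t * (1 - c / F t)) t :=
  (((hasDerivAt_const t c).div hF hFt).const_sub 1).congr_deriv (by field_simp; ring)

end RiccatiLinearization

theorem hasDerivAt_sinh_cosh_mul_exp (ν ω a b t : ℝ) :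
    HasDerivAt (fun t => (a * sinh (ω * t) + b * cosh (ω * t)) * exp (-(ν * t) / 2))
      (((b * ω - ν * a / 2) * sinh (ω * t) + (a * ω - ν * b / 2) * cosh (ω * t)) *
        exp (-(ν * t) / 2)) t := by
  have hlin : HasDerivAt (fun t => ω * t) ω t := by
    simpa using (hasDerivAt_id t).const_mul ω
  have hexp : HasDerivAt (fun t => -(ν * t) / 2) (-ν / 2) t := by
    simpa [neg_div] using ((hasDerivAt_id t).const_mul ν).neg.div_const 2
  refine (((((hasDerivAt_sinh _).comp t hlin).const_mul a).add
    (((hasDerivAt_cosh _).comp t hlin).const_mul b)).mul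
      ((hasDerivAt_exp _).comp t hexp)).congr_deriv ?_
  simp only [Function.comp, Pi.add_apply]
  ring

section OverdampedSolution

noncomputable def overdampedF (ν ω A₂₁ s₀ t : ℝ) : ℝ :=
  1 - s₀ + (A₂₁ * sinh (ω * t) + s₀ * cosh (ω * t)) * exp (-(ν * t) / 2)

noncomputable def overdampedG (ν ω A₂₂ q₀ t : ℝ) : ℝ :=
  (-A₂₂ * sinh (ω * t) + q₀ * cosh (ω * t)) * exp (-(ν * t) / 2)

variable {ν r ω A₂₁ A₂₂ q₀ s₀ : ℝ}

theorem hasDerivAt_overdampedF (hr : r ^ 2 = ν ^ 2 - 4) (hr0 : r ≠ 0) (hω : ω = 1 / 2 * r)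
    (hA21 : A₂₁ = (ν * s₀ + 2 * q₀) / r) (hA22 : A₂₂ = (ν * q₀ + 2 * s₀) / r) (t : ℝ) :
    HasDerivAt (overdampedF ν ω A₂₁ s₀) (overdampedG ν ω A₂₂ q₀ t) t := by
  have hsinh : s₀ * ω - ν * A₂₁ / 2 = -A₂₂ := by
    rw [hω, hA21, hA22]; field_simp; linear_combination s₀ * hr
  have hcosh : A₂₁ * ω - ν * s₀ / 2 = q₀ := by
    rw [hω, hA21]; field_simp; ring
  refine ((hasDerivAt_sinh_cosh_mul_exp ν ω A₂₁ s₀ t).const_add (1 - s₀)).congr_deriv ?_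
  rw [overdampedG, hsinh, hcosh]

theorem hasDerivAt_overdampedG (hr : r ^ 2 = ν ^ 2 - 4) (hr0 : r ≠ 0) (hω : ω = 1 / 2 * r)
    (hA21 : A₂₁ = (ν * s₀ + 2 * q₀) / r) (hA22 : A₂₂ = (ν * q₀ + 2 * s₀) / r) (t : ℝ) :
    HasDerivAt (overdampedG ν ω A₂₂ q₀)
      (-ν * overdampedG ν ω A₂₂ q₀ t - overdampedF ν ω A₂₁ s₀ t + (1 - s₀)) t := by
  have hsinh : q₀ * ω - ν * -A₂₂ / 2 = ν * A₂₂ - A₂₁ := by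
    rw [hω, hA21, hA22]; field_simp; linear_combination q₀ * hr
  have hcosh : -A₂₂ * ω - ν * q₀ / 2 = -ν * q₀ - s₀ := by
    rw [hω, hA22]; field_simp; ring
  refine (hasDerivAt_sinh_cosh_mul_exp ν ω (-A₂₂) q₀ t).congr_deriv ?_
  rw [overdampedF, overdampedG, hsinh, hcosh]
  ring

end OverdampedSolution

/-- Explicit solution of the derivative system q' = -s - q² - νq, s' = q - qs
in the overdamped case ν > 2, via linearization. -/
theorem qs_solution_overdamped (ν : ℝ) (hν : 2 < ν) (q₀ s₀ : ℝ)
    (ω₁ : ℝ) (hω : ω₁ = (1/2) * Real.sqrt (ν ^ 2 - 4))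
    (A₂₁ A₂₂ : ℝ)
    (hA21 : A₂₁ = (ν * s₀ + 2 * q₀) / Real.sqrt (ν ^ 2 - 4))
    (hA22 : A₂₂ = (ν * q₀ + 2 * s₀) / Real.sqrt (ν ^ 2 - 4))
    (F G : ℝ → ℝ)
    (hF : F = fun t => 1 - s₀ + (A₂₁ * Real.sinh (ω₁ * t) + s₀ * Real.cosh (ω₁ * t)) * Real.exp (-(ν * t) / 2))
    (hG : G = fun t => (-A₂₂ * Real.sinh (ω₁ * t) + q₀ * Real.cosh (ω₁ * t)) * Real.exp (-(ν * t) / 2))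
    (q s : ℝ → ℝ)
    (hq : q = fun t => G t / F t)
    (hs : s = fun t => -deriv q t - q t ^ 2 - ν * q t) :
    F 0 = 1 ∧ G 0 = q₀ ∧
    (∀ t : ℝ, F t ≠ 0 →
      HasDerivAt q (-s t - q t ^ 2 - ν * q t) t ∧ HasDerivAt s (q t - q t * s t) t) ∧
      q 0 = q₀ ∧ s 0 = s₀ := by
  have hν4 : 0 < ν ^ 2 - 4 := by nlinarith
  have hr := Real.sq_sqrt hν4.le
  have hr0 := (Real.sqrt_pos.2 hν4).ne'
  have hF' (t : ℝ) : HasDerivAt F (G t) t :=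
    hF ▸ hG ▸ hasDerivAt_overdampedF hr hr0 hω hA21 hA22 t
  have hG' (t : ℝ) : HasDerivAt G (-ν * G t - F t + (1 - s₀)) t :=
    hF ▸ hG ▸ hasDerivAt_overdampedG hr hr0 hω hA21 hA22 t
  have hq' (t : ℝ) (ht : F t ≠ 0) : HasDerivAt q (-(1 - (1 - s₀) / F t) - q t ^ 2 - ν * q t) t :=
    hq ▸ hasDerivAt_div_of_linearSystem (hF' t) (hG' t) ht
  have hs_eq (t : ℝ) (ht : F t ≠ 0) : s t = 1 - (1 - s₀) / F t := by
    simp only [hs, (hq' t ht).deriv]; ring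
  have hF0 : F 0 = 1 := by simp [hF]
  have hG0 : G 0 = q₀ := by simp [hG]
  refine ⟨hF0, hG0, fun t ht => ⟨?_, ?_⟩, by simp [hq, hF0, hG0], ?_⟩
  · rw [hs_eq t ht]
    exact hq' t ht
  · have hs_near : (fun x => 1 - (1 - s₀) / F x) =ᶠ[𝓝 t] s :=
      ((hF' t).continuousAt.eventually_ne ht).mono fun x hx => (hs_eq x hx).symm
    rw [hs_eq t ht, hq]
    exact (hasDerivAt_one_sub_const_div (hF' t) ht).congr_of_eventuallyEq hs_near.symm
  · rw [hs_eq 0 (by simp [hF0]), hF0]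
    ring
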